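/- Let M be a lattice of rank r ≥ 2 and let 𝔬 ∈ M satisfy (𝔬.𝔬) = 3. Suppose (𝔬, e₁, …, e_{r−1}) is a basis of M. Then 𝔬 is a distinguished element of M if and only if the integer (eᵢ.eᵢ) − (𝔬.eᵢ) is even for every 1 ≤ i ≤ r − 1. -/

import Mathlib

/-!
Call `o` characteristic if `(x.x) ≡ (x.o) mod 2` for every `x`. When `(o.o)` is odd, `o` is
characteristic iff `⟨o⟩⊥` is even: for any `x`, with `a = (x.o)` and `c = (o.o)`, the vector
`c • x - a • o` lies in `⟨o⟩⊥` and has square `c² (x.x) - c a² ≡ (x.x) - (x.o) mod 2`.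
For a symmetric form `x ↦ (x.x) mod 2` is additive, hence `ℤ`-linear, so being characteristic
can be tested on a basis; on `o = b 0` itself it holds because `(o.o) - (o.o) = 0`.
-/

theorem Int.even_sub_iff_intCast_eq (m n : ℤ) : Even (m - n) ↔ (m : ZMod 2) = n := by
  rw [← ZMod.intCast_eq_zero_iff_even, Int.cast_sub, sub_eq_zero]

namespace LinearMap

variable {M : Type*} [AddCommGroup M] [Module ℤ M]

def IsCharacteristic (B : M →ₗ[ℤ] M →ₗ[ℤ] ℤ) (o : M) : Prop :=
  ∀ x, Even (B x x - B x o)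

def diagParity (B : M →ₗ[ℤ] M →ₗ[ℤ] ℤ) (hB : ∀ x y, B x y = B y x) : M →ₗ[ℤ] ZMod 2 where
  toFun x := (B x x : ZMod 2)
  map_add' x y := by
    have two_eq_zero : (2 : ZMod 2) = 0 := rfl
    simp only [map_add, add_apply, hB y x, Int.cast_add]
    linear_combination (B x y : ZMod 2) * two_eq_zero
  map_smul' c x := by
    have sq_self : ∀ z : ZMod 2, z * z = z := by decide
    simp only [map_smul, smul_apply, smul_eq_mul, Int.cast_mul, RingHom.id_apply, zsmul_eq_mul]
    rw [← mul_assoc, sq_self]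

theorem isCharacteristic_iff_forall_basis {ι : Type*} {B : M →ₗ[ℤ] M →ₗ[ℤ] ℤ}
    (hB : ∀ x y, B x y = B y x) (b : Module.Basis ι ℤ M) (o : M) :
    B.IsCharacteristic o ↔ ∀ i, Even (B (b i) (b i) - B (b i) o) := by
  let pairing : M →ₗ[ℤ] ZMod 2 := Algebra.linearMap ℤ (ZMod 2) ∘ₗ B.flip o
  have key : B.IsCharacteristic o ↔ diagParity B hB = pairing := by
    simp only [IsCharacteristic, LinearMap.ext_iff, Int.even_sub_iff_intCast_eq]
    rfl
  refine ⟨fun h i => h (b i), fun h => key.2 (b.ext fun i => ?_)⟩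
  exact (Int.even_sub_iff_intCast_eq _ _).1 (h i)

theorem isCharacteristic_iff_even_of_orthogonal {B : M →ₗ[ℤ] M →ₗ[ℤ] ℤ}
    (hB : ∀ x y, B x y = B y x) {o : M} (ho : Odd (B o o)) :
    B.IsCharacteristic o ↔ ∀ x, B x o = 0 → Even (B x x) := by
  refine ⟨fun h x hx => by simpa [hx] using h x, fun h x => ?_⟩
  set a := B x o
  set c := B o o
  have orth : B (c • x - a • o) o = 0 := by
    simp only [map_sub, map_zsmul, sub_apply, smul_apply, smul_eq_mul, a, c]
    ring
  have square : B (c • x - a • o) (c • x - a • o) = c * c * B x x - c * (a * a) := by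
    simp only [map_sub, map_zsmul, sub_apply, smul_apply, smul_eq_mul, hB o x, a, c]
    ring
  have hsq := h _ orth
  rw [square] at hsq
  have hc : Odd (c * c) := ho.mul ho
  rw [Int.even_sub] at hsq ⊢
  simpa [Int.even_mul, Int.not_even_iff_odd.2 ho, Int.not_even_iff_odd.2 hc] using hsq

end LinearMap

theorem distinguished_iff_even_diagonal
    {M : Type*} [AddCommGroup M] [Module ℤ M]
    (n : ℕ)
    (B : M →ₗ[ℤ] M →ₗ[ℤ] ℤ)
    (hsymm : ∀ x y : M, B x y = B y x)
    (b : Module.Basis (Fin (n + 1)) ℤ M)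
    (o : M) (ho : b 0 = o) (ho3 : B o o = 3) :
    (∀ x : M, B x o = 0 → Even (B x x)) ↔
      ∀ i : Fin n, Even (B (b i.succ) (b i.succ) - B o (b i.succ)) := by
  have hodd : Odd (B o o) := by rw [ho3]; decide
  rw [← LinearMap.isCharacteristic_iff_even_of_orthogonal hsymm hodd,
    LinearMap.isCharacteristic_iff_forall_basis hsymm b, Fin.forall_fin_succ, ho, sub_self]
  simp only [Even.zero, true_and, hsymm _ o]
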